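/- Uniform lower bound for the convexified control blocks (Lemma 5.6): Assume uniform SOSC with constant γ > 0, and let δ ∈ (0, γ). Then the convexification recursion with parameter δ satisfies R̃_k(δ) ⪰ γI for all k = 0,…,N−1. -/

import Mathlib

open Matrix BigOperators Finset

/-- The Euclidean norm of a vector in `ℝ^n`. -/
noncomputable def evNorm {n : ℕ} (x : Fin n → ℝ) : ℝ :=
  ‖(EuclideanSpace.equiv (Fin n) ℝ).symm x‖

/-- Uniform SOSC with constant `γ`. -/
def USOSC {nx nu : ℕ} (N : ℕ) (γ : ℝ)
    (A : ℕ → Matrix (Fin nx) (Fin nx) ℝ) (B : ℕ → Matrix (Fin nx) (Fin nu) ℝ)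
    (Q : ℕ → Matrix (Fin nx) (Fin nx) ℝ) (R : ℕ → Matrix (Fin nu) (Fin nu) ℝ)
    (S : ℕ → Matrix (Fin nu) (Fin nx) ℝ) : Prop :=
  ∀ (p : ℕ → Fin nx → ℝ) (q : ℕ → Fin nu → ℝ),
    p 0 = 0 → (∀ k < N, p (k + 1) = A k *ᵥ p k + B k *ᵥ q k) →
    γ * ((∑ k ∈ range (N + 1), evNorm (p k) ^ 2) + ∑ k ∈ range N, evNorm (q k) ^ 2)
      ≤ (∑ k ∈ range N,
          (p k ⬝ᵥ Q k *ᵥ p k + 2 * (q k ⬝ᵥ S k *ᵥ p k) + q k ⬝ᵥ R k *ᵥ q k))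
        + p N ⬝ᵥ Q N *ᵥ p N

/-!
Fix `k < N` and a control `x`. Apply `x` at time `k` and the feedback `q_j = -R̃_j⁻¹ S̃_j p_j`
at every other time; the state then vanishes up to time `k`. Completing the square stage by
stage, the recursion for `Q̄` makes the stage cost at `j ≠ k` plus `p_{j+1}ᵀ Q̄_{j+1} p_{j+1}`
equal to `p_jᵀ Q̄_j p_j + δ‖p_j‖²`, while at `j = k` it is `xᵀ R̃_k x`. The total cost telescopes
to `xᵀ R̃_k x + δ Σ ‖p_j‖²`, which uniform SOSC bounds below by `γ (‖x‖² + Σ ‖p_j‖²)`; as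
`δ ≤ γ`, this leaves `xᵀ R̃_k x ≥ γ ‖x‖²`.

The identity `R⁻¹ R R⁻¹ = R⁻¹` holds for the total inverse even when `R` is singular, so the
argument needs no invertibility of the `R̃_j`, only their symmetry.
-/

lemma evNorm_sq {n : ℕ} (x : Fin n → ℝ) : evNorm x ^ 2 = x ⬝ᵥ x := by
  rw [evNorm, EuclideanSpace.norm_eq, Real.sq_sqrt (by positivity)]
  simp [dotProduct, sq]

namespace Matrix

variable {l m n α : Type*} [CommRing α]

lemma mulVec_dotProduct_mulVec [Fintype l] [Fintype m] [Fintype n] (X : Matrix l m α)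
    (Y : Matrix l n α) (x : m → α) (y : n → α) :
    X *ᵥ x ⬝ᵥ Y *ᵥ y = x ⬝ᵥ (Xᵀ * Y) *ᵥ y := by
  rw [← mulVec_mulVec, dotProduct_mulVec x Xᵀ, vecMul_transpose]

lemma IsSymm.transpose_mul_mul [Fintype m] {P : Matrix m m α} (hP : P.IsSymm) (B : Matrix m n α) :
    (Bᵀ * P * B).IsSymm := by
  rw [IsSymm, transpose_mul, transpose_mul, transpose_transpose, hP.eq, Matrix.mul_assoc]

lemma nonsing_inv_mul_mul_nonsing_inv [Fintype n] [DecidableEq n] (A : Matrix n n α) :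
    A⁻¹ * A * A⁻¹ = A⁻¹ := by
  rcases nonsing_inv_cancel_or_zero A with ⟨h, -⟩ | h
  · rw [h, Matrix.one_mul]
  · rw [h, Matrix.zero_mul, Matrix.zero_mul]

end Matrix

section StageCost

variable {m n α : Type*} [Fintype m] [Fintype n] [CommRing α]

def stageCost (Q : Matrix m m α) (R : Matrix n n α) (S : Matrix n m α) (p : m → α) (u : n → α) :
    α :=
  p ⬝ᵥ Q *ᵥ p + 2 * (u ⬝ᵥ S *ᵥ p) + u ⬝ᵥ R *ᵥ u

@[simp]
lemma stageCost_zero_left (Q : Matrix m m α) (R : Matrix n n α) (S : Matrix n m α) (u : n → α) :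
    stageCost Q R S 0 u = u ⬝ᵥ R *ᵥ u := by
  simp [stageCost]

lemma stageCost_add_next {P : Matrix m m α} (hP : P.IsSymm) (A : Matrix m m α)
    (B : Matrix m n α) (Q : Matrix m m α) (R : Matrix n n α) (S : Matrix n m α)
    (p : m → α) (u : n → α) :
    stageCost Q R S p u + (A *ᵥ p + B *ᵥ u) ⬝ᵥ P *ᵥ (A *ᵥ p + B *ᵥ u)
      = stageCost (Q + Aᵀ * P * A) (R + Bᵀ * P * B) (S + Bᵀ * P * A) p u := by
  have hcross : A *ᵥ p ⬝ᵥ P *ᵥ (B *ᵥ u) = B *ᵥ u ⬝ᵥ P *ᵥ (A *ᵥ p) := by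
    rw [dotProduct_mulVec, ← mulVec_transpose, hP.eq, dotProduct_comm]
  rw [mulVec_add, dotProduct_add, add_dotProduct, add_dotProduct, hcross]
  simp only [stageCost, add_mulVec, dotProduct_add, mulVec_mulVec, mulVec_dotProduct_mulVec,
    Matrix.mul_assoc]
  ring

lemma stageCost_feedback [DecidableEq n] {R : Matrix n n α} (hR : R.IsSymm) (Q : Matrix m m α)
    (S : Matrix n m α) (p : m → α) :
    stageCost Q R S p (-(R⁻¹ * S) *ᵥ p) = p ⬝ᵥ (Q - Sᵀ * R⁻¹ * S) *ᵥ p := by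
  have hgain : (R⁻¹ * S)ᵀ = Sᵀ * R⁻¹ := by rw [transpose_mul, hR.inv.eq]
  have hquad : R⁻¹ * (R * (R⁻¹ * S)) = R⁻¹ * S := by
    rw [← Matrix.mul_assoc R⁻¹ R, ← Matrix.mul_assoc (R⁻¹ * R), nonsing_inv_mul_mul_nonsing_inv]
  simp only [stageCost, neg_mulVec, neg_dotProduct, dotProduct_neg, mulVec_neg, neg_neg,
    mulVec_dotProduct_mulVec, hgain, mulVec_mulVec, Matrix.mul_assoc, hquad,
    sub_mulVec, dotProduct_sub]
  ring

lemma stageCost_add_next_of_feedback [DecidableEq m] [DecidableEq n] {A P P' Q : Matrix m m α}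
    {B : Matrix m n α} {R Rt : Matrix n n α} {S St : Matrix n m α} {δ : α}
    (hP' : P'.IsSymm) (hRtSymm : Rt.IsSymm) (hRt : Rt = R + Bᵀ * P' * B)
    (hSt : St = S + Bᵀ * P' * A) (hP : P = Q + Aᵀ * P' * A - (Stᵀ * Rt⁻¹ * St + δ • 1))
    {p : m → α} {u : n → α} (hu : u = -(Rt⁻¹ * St) *ᵥ p) :
    stageCost Q R S p u + (A *ᵥ p + B *ᵥ u) ⬝ᵥ P' *ᵥ (A *ᵥ p + B *ᵥ u)
      = p ⬝ᵥ P *ᵥ p + δ * (p ⬝ᵥ p) := by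
  rw [stageCost_add_next hP', ← hRt, ← hSt, hu, stageCost_feedback hRtSymm, hP]
  simp only [sub_mulVec, add_mulVec, smul_mulVec, one_mulVec, dotProduct_sub, dotProduct_add,
    dotProduct_smul, smul_eq_mul]
  ring

end StageCost

section ClosedLoop

variable {m n α : Type*} [Fintype m] [Fintype n] [CommRing α]

def closedLoopState (A : ℕ → Matrix m m α) (B : ℕ → Matrix m n α)
    (u : ℕ → (m → α) → n → α) : ℕ → m → α
  | 0 => 0
  | j + 1 => A j *ᵥ closedLoopState A B u j + B j *ᵥ u j (closedLoopState A B u j)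

lemma closedLoopState_eq_zero {A : ℕ → Matrix m m α} {B : ℕ → Matrix m n α}
    {u : ℕ → (m → α) → n → α} {k : ℕ} (hu : ∀ j < k, u j 0 = 0) :
    ∀ j ≤ k, closedLoopState A B u j = 0
  | 0, _ => rfl
  | j + 1, hj => by
    rw [closedLoopState, closedLoopState_eq_zero hu j (by omega), hu j hj]
    simp

end ClosedLoop

section Convexification

variable {m n α : Type*} [Fintype m] [Fintype n] [DecidableEq m] [DecidableEq n] [CommRing α]
  {N : ℕ} {δ : α} {A : ℕ → Matrix m m α} {B : ℕ → Matrix m n α} {Q : ℕ → Matrix m m α}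
  {R : ℕ → Matrix n n α} {S : ℕ → Matrix n m α} {Qbar : ℕ → Matrix m m α}
  {Rt : ℕ → Matrix n n α} {St : ℕ → Matrix n m α} {Qt : ℕ → Matrix m m α}

lemma isSymm_Qbar (hQsymm : ∀ k ≤ N, (Q k).IsSymm) (hRsymm : ∀ k < N, (R k).IsSymm)
    (hQbarN : Qbar N = Q N - δ • 1)
    (hRt : ∀ k < N, Rt k = R k + (B k)ᵀ * Qbar (k + 1) * B k)
    (hQt : ∀ k < N, Qt k = (St k)ᵀ * (Rt k)⁻¹ * St k + δ • 1)
    (hQbar : ∀ k < N, Qbar k = Q k + (A k)ᵀ * Qbar (k + 1) * A k - Qt k)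
    {k : ℕ} (hk : k ≤ N) : (Qbar k).IsSymm := by
  induction hk using Nat.decreasingInduction with
  | self => rw [hQbarN]; exact (hQsymm N le_rfl).sub (isSymm_one.smul δ)
  | of_succ k hk ih =>
    have hRtk : (Rt k).IsSymm := hRt k hk ▸ (hRsymm k hk).add (ih.transpose_mul_mul _)
    rw [hQbar k hk, hQt k hk]
    exact ((hQsymm k hk.le).add (ih.transpose_mul_mul _)).sub
      ((hRtk.inv.transpose_mul_mul _).add (isSymm_one.smul δ))

lemma sum_stageCost_eq_of_feedback (hQbarN : Qbar N = Q N - δ • 1)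
    (hRt : ∀ k < N, Rt k = R k + (B k)ᵀ * Qbar (k + 1) * B k)
    (hSt : ∀ k < N, St k = S k + (B k)ᵀ * Qbar (k + 1) * A k)
    (hQt : ∀ k < N, Qt k = (St k)ᵀ * (Rt k)⁻¹ * St k + δ • 1)
    (hQbar : ∀ k < N, Qbar k = Q k + (A k)ᵀ * Qbar (k + 1) * A k - Qt k)
    (hQbarSymm : ∀ j ≤ N, (Qbar j).IsSymm) (hRtSymm : ∀ j < N, (Rt j).IsSymm)
    {p : ℕ → m → α} {q : ℕ → n → α} (hp0 : p 0 = 0)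
    (hp : ∀ j < N, p (j + 1) = A j *ᵥ p j + B j *ᵥ q j) {k : ℕ} (hk : k < N) (hpk : p k = 0)
    (hq : ∀ j < N, j ≠ k → q j = -((Rt j)⁻¹ * St j) *ᵥ p j) :
    ∑ j ∈ range N, stageCost (Q j) (R j) (S j) (p j) (q j) + p N ⬝ᵥ Q N *ᵥ p N
      = q k ⬝ᵥ Rt k *ᵥ q k + δ * ∑ j ∈ range (N + 1), p j ⬝ᵥ p j := by
  set V : ℕ → α := fun j => p j ⬝ᵥ Qbar j *ᵥ p j
  have hstep : ∀ j ∈ range N, stageCost (Q j) (R j) (S j) (p j) (q j)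
      = V j - V (j + 1) + (δ * (p j ⬝ᵥ p j) + if j = k then q k ⬝ᵥ Rt k *ᵥ q k else 0) := by
    intro j hj
    rw [mem_range] at hj
    rcases eq_or_ne j k with rfl | hjk
    · have h := stageCost_add_next (hQbarSymm (j + 1) hj) (A j) (B j) (Q j) (R j) (S j) (p j) (q j)
      rw [← hp j hj, ← hRt j hj, hpk] at h
      simp only [V, hpk, stageCost_zero_left, zero_dotProduct, if_pos] at h ⊢
      linear_combination h
    · have hQbarj := hQbar j hj
      rw [hQt j hj] at hQbarj
      have h := stageCost_add_next_of_feedback (hQbarSymm (j + 1) hj) (hRtSymm j hj) (hRt j hj)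
        (hSt j hj) hQbarj (hq j hj hjk)
      rw [← hp j hj] at h
      rw [if_neg hjk]
      linear_combination h
  rw [sum_congr rfl hstep, sum_add_distrib, sum_range_sub', sum_add_distrib, ← mul_sum,
    sum_ite_eq', if_pos (mem_range.2 hk), sum_range_succ]
  simp only [V, hp0, hQbarN, sub_mulVec, smul_mulVec, one_mulVec, dotProduct_sub, dotProduct_smul,
    smul_eq_mul, zero_dotProduct]
  ring

end Convexification

lemma Matrix.posSemidef_sub_smul_one_of_le {n : Type*} [Fintype n] [DecidableEq n]
    {M : Matrix n n ℝ} (hM : M.IsSymm) {c : ℝ} (h : ∀ x, c * (x ⬝ᵥ x) ≤ x ⬝ᵥ M *ᵥ x) :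
    (M - c • 1).PosSemidef := by
  refine posSemidef_iff_dotProduct_mulVec.mpr
    ⟨isHermitian_iff_isSymm.mpr (hM.sub (isSymm_one.smul c)), fun x => ?_⟩
  simpa [sub_mulVec, smul_mulVec, dotProduct_sub, dotProduct_smul] using h x

theorem convexified_R_uniform_lower_bound_general
    (N nx nu : ℕ)
    (γ δ : ℝ) (hγ : 0 < γ) (hδγ : δ < γ)
    (A : ℕ → Matrix (Fin nx) (Fin nx) ℝ) (B : ℕ → Matrix (Fin nx) (Fin nu) ℝ)
    (Q : ℕ → Matrix (Fin nx) (Fin nx) ℝ) (R : ℕ → Matrix (Fin nu) (Fin nu) ℝ)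
    (S : ℕ → Matrix (Fin nu) (Fin nx) ℝ)
    (hQsymm : ∀ k ≤ N, (Q k).IsSymm) (hRsymm : ∀ k < N, (R k).IsSymm)
    (husosc : USOSC N γ A B Q R S)
    (Qbar : ℕ → Matrix (Fin nx) (Fin nx) ℝ) (Rt : ℕ → Matrix (Fin nu) (Fin nu) ℝ)
    (St : ℕ → Matrix (Fin nu) (Fin nx) ℝ) (Qt : ℕ → Matrix (Fin nx) (Fin nx) ℝ)
    (hQbarN : Qbar N = Q N - δ • (1 : Matrix (Fin nx) (Fin nx) ℝ))
    (hRt : ∀ k < N, Rt k = R k + (B k)ᵀ * Qbar (k + 1) * B k)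
    (hSt : ∀ k < N, St k = S k + (B k)ᵀ * Qbar (k + 1) * A k)
    (hQt : ∀ k < N, Qt k = (St k)ᵀ * (Rt k)⁻¹ * St k
      + δ • (1 : Matrix (Fin nx) (Fin nx) ℝ))
    (hQbar : ∀ k < N, Qbar k = Q k + (A k)ᵀ * Qbar (k + 1) * A k - Qt k) :
    ∀ k < N, (Rt k - γ • (1 : Matrix (Fin nu) (Fin nu) ℝ)).PosSemidef := by
  have hQbarSymm : ∀ j ≤ N, (Qbar j).IsSymm := fun j hj =>
    isSymm_Qbar hQsymm hRsymm hQbarN hRt hQt hQbar hj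
  have hRtSymm : ∀ j < N, (Rt j).IsSymm := fun j hj =>
    hRt j hj ▸ (hRsymm j hj).add ((hQbarSymm (j + 1) hj).transpose_mul_mul _)
  intro k hk
  refine posSemidef_sub_smul_one_of_le (hRtSymm k hk) fun x => ?_
  set u : ℕ → (Fin nx → ℝ) → Fin nu → ℝ :=
    fun j w => if j = k then x else -((Rt j)⁻¹ * St j) *ᵥ w
  set p := closedLoopState A B u
  set q : ℕ → Fin nu → ℝ := fun j => u j (p j)
  have hpk : p k = 0 := closedLoopState_eq_zero (fun j hj => by simp [u, hj.ne]) k le_rfl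
  have hqk : q k = x := if_pos rfl
  have hcost := sum_stageCost_eq_of_feedback hQbarN hRt hSt hQt hQbar hQbarSymm hRtSymm
    (q := q) rfl (fun j _ => rfl) hk hpk (fun j _ hjk => if_neg hjk)
  have hsosc := husosc p q rfl (fun j _ => rfl)
  have hq : evNorm x ^ 2 ≤ ∑ j ∈ range N, evNorm (q j) ^ 2 :=
    hqk ▸ single_le_sum (fun j _ => sq_nonneg (evNorm (q j))) (mem_range.2 hk)
  have hp : 0 ≤ ∑ j ∈ range (N + 1), evNorm (p j) ^ 2 := by positivity
  rw [hqk] at hcost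
  simp only [stageCost, ← evNorm_sq] at hcost ⊢
  linarith [mul_le_mul_of_nonneg_left hq hγ.le, mul_le_mul_of_nonneg_right hδγ.le hp]

/-- **Uniform lower bound for the convexified control blocks (Lemma 5.6).**
Under uniform SOSC with constant `γ > 0`, for every `δ ∈ (0, γ)` the convexification
recursion with parameter `δ` satisfies `R̃_k(δ) ⪰ γI` for all `k < N`. -/
theorem convexified_R_uniform_lower_bound
    (N nx nu : ℕ) (hN : 1 ≤ N) (hnx : 1 ≤ nx) (hnu : 1 ≤ nu)
    (γ δ : ℝ) (hγ : 0 < γ) (hδ0 : 0 < δ) (hδγ : δ < γ)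
    (A : ℕ → Matrix (Fin nx) (Fin nx) ℝ) (B : ℕ → Matrix (Fin nx) (Fin nu) ℝ)
    (Q : ℕ → Matrix (Fin nx) (Fin nx) ℝ) (R : ℕ → Matrix (Fin nu) (Fin nu) ℝ)
    (S : ℕ → Matrix (Fin nu) (Fin nx) ℝ)
    (hQsymm : ∀ k ≤ N, (Q k).IsSymm) (hRsymm : ∀ k < N, (R k).IsSymm)
    (husosc : USOSC N γ A B Q R S)
    (Qbar : ℕ → Matrix (Fin nx) (Fin nx) ℝ) (Rt : ℕ → Matrix (Fin nu) (Fin nu) ℝ)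
    (St : ℕ → Matrix (Fin nu) (Fin nx) ℝ) (Qt : ℕ → Matrix (Fin nx) (Fin nx) ℝ)
    (hQbarN : Qbar N = Q N - δ • (1 : Matrix (Fin nx) (Fin nx) ℝ))
    (hRt : ∀ k < N, Rt k = R k + (B k)ᵀ * Qbar (k + 1) * B k)
    (hSt : ∀ k < N, St k = S k + (B k)ᵀ * Qbar (k + 1) * A k)
    (hQt : ∀ k < N, Qt k = (St k)ᵀ * (Rt k)⁻¹ * St k
      + δ • (1 : Matrix (Fin nx) (Fin nx) ℝ))
    (hQbar : ∀ k < N, Qbar k = Q k + (A k)ᵀ * Qbar (k + 1) * A k - Qt k) :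
    ∀ k < N, (Rt k - γ • (1 : Matrix (Fin nu) (Fin nu) ℝ)).PosSemidef :=
  convexified_R_uniform_lower_bound_general N nx nu γ δ hγ hδγ A B Q R S hQsymm hRsymm husosc Qbar
    Rt St Qt hQbarN hRt hSt hQt hQbar
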